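/- arXiv:1902.08500 — 3 statements merged into one kernel-verified Lean document; each statement's English description precedes it below -/
import Mathlib

section
/- The function Φ(θ) = a²b²(e^{-θ} - 1 + θ)/θ³ + σ², defined for θ > 0 (with a ≠ 0, b ≠ 0 real constants), is strictly decreasing on (0, ∞). -/
/-!
Write `Φ(θ) = a²b² g(θ) + σ²` with `g(θ) = (e^{-θ} - 1 + θ) / θ³`, so it suffices that `g` is
strictly decreasing. Its derivative is `h(θ) / θ⁴` with `h(θ) = 3 - 2θ - (3 + θ) e^{-θ}`, and
`h < 0` on `(0, ∞)` because `h(0) = 0` and `h'(θ) = -2 + (2 + θ) e^{-θ} < 0` there, by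
`2 + θ < 2 (1 + θ) < 2 e^θ`.
-/

open Real Set

lemma hasDerivAt_exp_neg (x : ℝ) : HasDerivAt (fun t => exp (-t)) (-exp (-x)) x := by
  simpa using (hasDerivAt_neg x).exp

lemma strictAntiOn_three_sub_two_mul_sub_mul_exp_neg :
    StrictAntiOn (fun t => 3 - 2 * t - (3 + t) * exp (-t)) (Ici 0) := by
  have hderiv (x : ℝ) : HasDerivAt (fun t => 3 - 2 * t - (3 + t) * exp (-t))
      (-2 + (2 + x) * exp (-x)) x :=
    ((((hasDerivAt_id' x).const_mul 2).const_sub 3).sub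
      (((hasDerivAt_id' x).const_add 3).mul (hasDerivAt_exp_neg x))).congr_deriv (by ring)
  refine strictAntiOn_of_hasDerivWithinAt_neg (convex_Ici 0)
    (fun x _ => (hderiv x).continuousAt.continuousWithinAt)
    (fun x _ => (hderiv x).hasDerivWithinAt) fun x hx => ?_
  rw [interior_Ici, mem_Ioi] at hx
  have hexp : x + 1 < exp x := add_one_lt_exp hx.ne'
  have hinv : exp (-x) * exp x = 1 := by rw [← exp_add, neg_add_cancel, exp_zero]
  nlinarith [exp_pos (-x)]

lemma three_sub_two_mul_sub_mul_exp_neg_neg {x : ℝ} (hx : 0 < x) :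
    3 - 2 * x - (3 + x) * exp (-x) < 0 := by
  simpa using strictAntiOn_three_sub_two_mul_sub_mul_exp_neg self_mem_Ici hx.le hx

lemma hasDerivAt_exp_neg_sub_one_add_div_pow_three {x : ℝ} (hx : x ≠ 0) :
    HasDerivAt (fun t => (exp (-t) - 1 + t) / t ^ 3)
      ((3 - 2 * x - (3 + x) * exp (-x)) / x ^ 4) x := by
  refine ((((hasDerivAt_exp_neg x).sub_const 1).add (hasDerivAt_id' x)).div
    (hasDerivAt_pow 3 x) (pow_ne_zero 3 hx)).congr_deriv ?_
  simp only [Pi.add_apply]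
  field_simp
  ring

lemma strictAntiOn_exp_neg_sub_one_add_div_pow_three :
    StrictAntiOn (fun t => (exp (-t) - 1 + t) / t ^ 3) (Ioi 0) := by
  have hderiv (x : ℝ) (hx : x ∈ Ioi 0) :=
    hasDerivAt_exp_neg_sub_one_add_div_pow_three (ne_of_gt hx)
  refine strictAntiOn_of_hasDerivWithinAt_neg (convex_Ioi 0)
    (fun x hx => (hderiv x hx).continuousAt.continuousWithinAt)
    (fun x hx => (hderiv x (interior_subset hx)).hasDerivWithinAt) fun x hx => ?_
  rw [interior_Ioi] at hx
  exact div_neg_of_neg_of_pos (three_sub_two_mul_sub_mul_exp_neg_neg hx) (pow_pos hx 4)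

/-- The function `Φ(θ) = a²b²(e^{-θ} - 1 + θ)/θ³ + σ²` is strictly decreasing on `(0, ∞)`. -/
theorem phi_strictAntiOn (a b σ : ℝ) (ha : a ≠ 0) (hb : b ≠ 0) :
    StrictAntiOn (fun θ : ℝ => a ^ 2 * b ^ 2 * (Real.exp (-θ) - 1 + θ) / θ ^ 3 + σ ^ 2)
      (Set.Ioi (0 : ℝ)) := by
  intro x hx y hy hxy
  have hg := strictAntiOn_exp_neg_sub_one_add_div_pow_three hx hy hxy
  have hc : 0 < a ^ 2 * b ^ 2 := by positivity
  simp only [mul_div_assoc] at hg ⊢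
  gcongr
end

section
/- Any solution γ(θ, t) of the Riccati equation ∂γ/∂t = −2θγ − γ²a²/σ² + b² with initial value γ(θ,0) = d² ≥ 0 converges to the stationary value γ(θ) exponentially fast: |γ(θ,t) − γ(θ)| ≤ C e^{−2r(θ)t} for some constant C > 0, where r(θ) = √(θ² + a²b²/σ²). -/
/-!
Write `k = a²/σ²`, `r = √(θ² + k b²)`. The right-hand side factors as `-k (γ - p) (γ - q)` with roots
`p = (r - θ)/k = γ(θ) > 0` and `q = -(r + θ)/k < 0`, so that `k (p - q) = 2r`. The solution stays
nonnegative, since `γ' = b² > 0` wherever `γ = 0`; hence `γ > q`, and the cross-ratio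
`u = (γ - p)/(γ - q)` solves `u' = -2r u`, i.e. `u(t) = u(0) e^{-2rt}`. Solving for `γ` gives
`|γ - p| = (p - q) |u| / (1 - u)`, and `1 - u(t) ≥ 1 - max (u(0), 0) > 0` bounds the denominator.
-/

open Real

theorem nonneg_of_hasDerivAt_pos_of_eq_zero {f f' : ℝ → ℝ} (h0 : 0 ≤ f 0)
    (hf : ∀ t, 0 ≤ t → HasDerivAt f (f' t) t) (hpos : ∀ t, 0 ≤ t → f t = 0 → 0 < f' t)
    {t : ℝ} (ht : 0 ≤ t) : 0 ≤ f t := by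
  have key := image_le_of_deriv_right_lt_deriv_boundary' (f := fun s => -f s) (f' := fun s => -f' s)
    (a := 0) (b := t) (B := 0) (B' := 0)
    (fun s hs => (hf s hs.1).continuousAt.neg.continuousWithinAt)
    (fun s hs => (hf s hs.1).neg.hasDerivWithinAt) (by simpa using h0) continuousOn_const
    (fun s _ => hasDerivWithinAt_const _ _ _)
    (fun s hs hfs => by simpa using hpos s hs.1 (neg_eq_zero.mp hfs))
    ⟨ht, le_rfl⟩
  simpa using key

theorem eq_of_hasDerivAt_zero_of_nonneg {f : ℝ → ℝ} (hf : ∀ t, 0 ≤ t → HasDerivAt f 0 t)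
    {t : ℝ} (ht : 0 ≤ t) : f t = f 0 :=
  constant_of_has_deriv_right_zero (fun s hs => (hf s hs.1).continuousAt.continuousWithinAt)
    (fun s hs => (hf s hs.1).hasDerivWithinAt) t ⟨ht, le_rfl⟩

theorem riccati_cross_ratio_eq {k p q : ℝ} {f : ℝ → ℝ}
    (hf : ∀ t, 0 ≤ t → HasDerivAt f (-k * (f t - p) * (f t - q)) t)
    (hq : ∀ t, 0 ≤ t → f t ≠ q) {t : ℝ} (ht : 0 ≤ t) :
    (f t - p) / (f t - q) = (f 0 - p) / (f 0 - q) * exp (-(k * (p - q)) * t) := by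
  set c := k * (p - q)
  have hv : ∀ s, 0 ≤ s → HasDerivAt (fun s => (f s - p) / (f s - q) * exp (c * s)) 0 s := by
    intro s hs
    have hfq : f s - q ≠ 0 := sub_ne_zero.mpr (hq s hs)
    have hexp : HasDerivAt (fun s => exp (c * s)) (exp (c * s) * c) s := by
      simpa using ((hasDerivAt_id s).const_mul c).exp
    refine ((((hf s hs).sub_const p).fun_div ((hf s hs).sub_const q) hfq).mul hexp).congr_deriv ?_
    field_simp
    ring
  have := eq_of_hasDerivAt_zero_of_nonneg hv ht
  simp only [mul_zero, exp_zero, mul_one] at this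
  rw [← this, mul_assoc, ← exp_add]
  simp

theorem abs_sub_eq_of_cross_ratio {y p q : ℝ} (hqy : q < y) (hpq : p ≠ q) :
    |y - p| = (p - q) * |(y - p) / (y - q)| / (1 - (y - p) / (y - q)) := by
  have hyq : 0 < y - q := sub_pos.mpr hqy
  have h1 : 1 - (y - p) / (y - q) = (p - q) / (y - q) := by field_simp; ring
  rw [h1, abs_div, abs_of_pos hyq]
  field_simp [sub_ne_zero.mpr hpq]

theorem riccati_exists_abs_sub_root_le {k p q : ℝ} {f : ℝ → ℝ} (hk : 0 ≤ k) (hqp : q < p)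
    (hf : ∀ t, 0 ≤ t → HasDerivAt f (-k * (f t - p) * (f t - q)) t)
    (hq : ∀ t, 0 ≤ t → q < f t) :
    ∃ C > 0, ∀ t, 0 ≤ t → |f t - p| ≤ C * exp (-(k * (p - q)) * t) := by
  set u₀ := (f 0 - p) / (f 0 - q)
  have hu₀ : u₀ < 1 := (div_lt_one (sub_pos.mpr (hq 0 le_rfl))).mpr (by linarith)
  have hδ : 0 < 1 - max u₀ 0 := sub_pos.mpr (max_lt hu₀ one_pos)
  refine ⟨(p - q) * |u₀| / (1 - max u₀ 0) + 1, by positivity, fun t ht => ?_⟩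
  set E := exp (-(k * (p - q)) * t)
  have hE₀ : 0 < E := exp_pos _
  have hE₁ : E ≤ 1 := by
    have := mul_nonneg (mul_nonneg hk (sub_pos.mpr hqp).le) ht
    exact exp_le_one_iff.mpr (by linarith [neg_mul (k * (p - q)) t])
  have hden : 1 - max u₀ 0 ≤ 1 - u₀ * E := by
    rcases le_or_gt 0 u₀ with h | h
    · nlinarith [le_max_left u₀ 0]
    · nlinarith [le_max_right u₀ 0]
  rw [abs_sub_eq_of_cross_ratio (hq t ht) hqp.ne',
    riccati_cross_ratio_eq hf (fun s hs => (hq s hs).ne') ht, abs_mul, abs_of_pos hE₀]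
  calc (p - q) * (|u₀| * E) / (1 - u₀ * E)
      ≤ (p - q) * (|u₀| * E) / (1 - max u₀ 0) := by gcongr
    _ = (p - q) * |u₀| / (1 - max u₀ 0) * E := by ring
    _ ≤ ((p - q) * |u₀| / (1 - max u₀ 0) + 1) * E := by gcongr; linarith

theorem sub_sq_add_eq_neg_mul_sub_mul_sub {θ k b r : ℝ} (hk : k ≠ 0)
    (hr : r ^ 2 = θ ^ 2 + k * b ^ 2) (x : ℝ) :
    -2 * θ * x - x ^ 2 * k + b ^ 2 = -k * (x - (r - θ) / k) * (x - -(r + θ) / k) := by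
  field_simp
  linear_combination -hr

theorem stationary_value_eq {a b σ θ : ℝ} (ha : a ≠ 0) (hσ : σ ≠ 0) (hθ : 0 < θ) :
    θ * σ ^ 2 / a ^ 2 * (√(1 + a ^ 2 * b ^ 2 / (θ ^ 2 * σ ^ 2)) - 1) =
      (√(θ ^ 2 + a ^ 2 * b ^ 2 / σ ^ 2) - θ) / (a ^ 2 / σ ^ 2) := by
  have h : 1 + a ^ 2 * b ^ 2 / (θ ^ 2 * σ ^ 2) = (θ ^ 2 + a ^ 2 * b ^ 2 / σ ^ 2) / θ ^ 2 := by
    field_simp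
  rw [h, sqrt_div' _ (sq_nonneg θ), sqrt_sq hθ.le]
  field_simp

/-- Any solution of the Riccati equation `∂γ/∂t = −2θγ − γ²a²/σ² + b²` starting from
`γ(0) = d² ≥ 0` converges exponentially fast to the stationary value `γ(θ)`:
`|γ(t) − γ(θ)| ≤ C e^{−2r(θ)t}` with `r(θ) = √(θ² + a²b²/σ²)`. -/
theorem riccati_exponential_convergence (a b σ θ d2 : ℝ) (ha : a ≠ 0) (hb : b ≠ 0)
    (hσ : σ ≠ 0) (hθ : 0 < θ) (hd2 : 0 ≤ d2)
    (γ : ℝ → ℝ) (hγ0 : γ 0 = d2)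
    (hode : ∀ t : ℝ, 0 ≤ t →
      HasDerivAt γ (-2 * θ * γ t - (γ t) ^ 2 * a ^ 2 / σ ^ 2 + b ^ 2) t) :
    ∃ C > 0, ∀ t : ℝ, 0 ≤ t →
      |γ t - θ * σ ^ 2 / a ^ 2 * (Real.sqrt (1 + a ^ 2 * b ^ 2 / (θ ^ 2 * σ ^ 2)) - 1)| ≤
        C * Real.exp (-2 * Real.sqrt (θ ^ 2 + a ^ 2 * b ^ 2 / σ ^ 2) * t) := by
  set k := a ^ 2 / σ ^ 2
  set r := √(θ ^ 2 + a ^ 2 * b ^ 2 / σ ^ 2)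
  set p := (r - θ) / k
  set q := -(r + θ) / k
  have hk : 0 < k := by positivity
  have hr : r ^ 2 = θ ^ 2 + k * b ^ 2 := by
    rw [sq_sqrt (by positivity)]
    ring
  have hθr : θ < r :=
    lt_of_pow_lt_pow_left₀ 2 (sqrt_nonneg _) (by nlinarith [sq_pos_of_ne_zero hb])
  have hq : q < 0 := div_neg_of_neg_of_pos (by linarith) hk
  have hp : 0 < p := div_pos (sub_pos.mpr hθr) hk
  have hrate : k * (p - q) = 2 * r := by
    simp only [p, q]
    field_simp
    ring
  have hγ : ∀ t, 0 ≤ t → HasDerivAt γ (-k * (γ t - p) * (γ t - q)) t :=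
    fun t ht => (hode t ht).congr_deriv <| by
      rw [← sub_sq_add_eq_neg_mul_sub_mul_sub hk.ne' hr, mul_div_assoc]
  have hγ_nonneg : ∀ t, 0 ≤ t → 0 ≤ γ t :=
    fun t => nonneg_of_hasDerivAt_pos_of_eq_zero (hγ0 ▸ hd2) hode fun t _ h => by
      simpa [h] using sq_pos_of_ne_zero hb
  obtain ⟨C, hC, hbound⟩ := riccati_exists_abs_sub_root_le hk.le (hq.trans hp) hγ
    fun t ht => hq.trans_le (hγ_nonneg t ht)
  refine ⟨C, hC, fun t ht => ?_⟩
  rw [stationary_value_eq ha hσ hθ, show -2 * r * t = -(k * (p - q)) * t by rw [hrate]; ring]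
  exact hbound t ht
end

section
/- The Fisher information I(θ) = 1/(2θ) − 2ṙ(θ)/(r(θ)+θ) + ṙ(θ)²/(2r(θ)), where r(θ) = √(θ² + c) with c = b²a²/σ² > 0 and ṙ(θ) = θ/r(θ), is strictly positive for every θ > 0. -/
/-!
Write `r = √(θ² + c)`, so that `ṙ = θ / r` and `θ < r`. Clearing the denominator `2θr³(r + θ)`
turns `I(θ)` into the binary quartic `r⁴ + r³θ − 4r²θ² + rθ³ + θ⁴`, which has a double root at
`r = θ` and factors as `(r − θ)² (r² + 3rθ + θ²)`; this is positive since `r ≠ θ`.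
-/

section FisherInformation

variable {r θ : ℝ}

theorem fisher_information_eq_sq_mul_div (hr : 0 < r) (hθ : 0 < θ) :
    1 / (2 * θ) - 2 * (θ / r) / (r + θ) + (θ / r) ^ 2 / (2 * r) =
      (r - θ) ^ 2 * (r ^ 2 + 3 * r * θ + θ ^ 2) / (2 * θ * r ^ 3 * (r + θ)) := by
  field_simp
  ring

theorem fisher_information_pos_of_ne (hr : 0 < r) (hθ : 0 < θ) (hne : θ ≠ r) :
    0 < 1 / (2 * θ) - 2 * (θ / r) / (r + θ) + (θ / r) ^ 2 / (2 * r) := by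
  rw [fisher_information_eq_sq_mul_div hr hθ]
  have hsq : 0 < (r - θ) ^ 2 := sq_pos_of_ne_zero (sub_ne_zero.mpr hne.symm)
  positivity

end FisherInformation

/-- The Fisher information `I(θ) = 1/(2θ) − 2ṙ(θ)/(r(θ)+θ) + ṙ(θ)²/(2r(θ))`, where
`r(θ) = √(θ² + c)` with `c > 0` and `ṙ(θ) = θ/r(θ)`, is strictly positive for `θ > 0`. -/
theorem fisher_information_pos (c θ : ℝ) (hc : 0 < c) (hθ : 0 < θ) :
    0 < 1 / (2 * θ) -
        2 * (θ / Real.sqrt (θ ^ 2 + c)) / (Real.sqrt (θ ^ 2 + c) + θ) +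
        (θ / Real.sqrt (θ ^ 2 + c)) ^ 2 / (2 * Real.sqrt (θ ^ 2 + c)) := by
  have hlt : θ < Real.sqrt (θ ^ 2 + c) := (Real.lt_sqrt hθ.le).mpr (by linarith)
  exact fisher_information_pos_of_ne (hθ.trans hlt) hθ hlt.ne
end
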